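/- arXiv:1106.1188 — 4 statements merged into one kernel-verified Lean document; each statement's English description precedes it below -/
import Mathlib

section
/- Let p be prime and let f be a modular function on Γ₀(p). Then p·(U_p f)(-1/(pτ)) = p·(U_p f)(pτ) + f(-1/(p²τ)) - f(τ), where U_p f(τ) = (1/p) Σ_{ℓ=0}^{p-1} f((τ+ℓ)/p). -/
/-!
Split off the `ℓ = 0` term of each sum: these are `f (-1/(p²τ))` and `f τ`. For `1 ≤ ℓ < p` let
`m ≡ -ℓ⁻¹ (mod p)`, so `ℓ m + 1 = p k`; the matrix `[[ℓ, -k], [p, -m]] ∈ Γ₀(p)` sends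
`τ + m/p` to `(-1/(pτ) + ℓ)/p`. Hence the `ℓ`-th term on the left equals the `m`-th term on
the right, and `ℓ ↦ m` is an involution of `{1, …, p-1}`.
-/

open Finset

noncomputable def UpFn (p : ℕ) (f : ℂ → ℂ) (z : ℂ) : ℂ :=
  (1 / (p : ℂ)) * ∑ ℓ ∈ range p, f ((z + ℓ) / p)

lemma natCast_mul_UpFn {p : ℕ} (hp : p ≠ 0) (f : ℂ → ℂ) (z : ℂ) :
    (p : ℂ) * UpFn p f z = ∑ ℓ ∈ range p, f ((z + ℓ) / p) := by
  rw [UpFn, ← mul_assoc, mul_one_div_cancel (Nat.cast_ne_zero.mpr hp), one_mul]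

def IsGamma0Invariant (N : ℕ) (f : ℂ → ℂ) : Prop :=
  ∀ γ : Matrix.SpecialLinearGroup (Fin 2) ℤ, γ ∈ CongruenceSubgroup.Gamma0 N →
    ∀ τ : ℂ, 0 < τ.im →
      f ((((γ : Matrix (Fin 2) (Fin 2) ℤ) 0 0 : ℂ) * τ + ((γ : Matrix (Fin 2) (Fin 2) ℤ) 0 1 : ℂ)) /
        (((γ : Matrix (Fin 2) (Fin 2) ℤ) 1 0 : ℂ) * τ + ((γ : Matrix (Fin 2) (Fin 2) ℤ) 1 1 : ℂ))) = f τ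

namespace IsGamma0Invariant

variable {N : ℕ} {f : ℂ → ℂ}

lemma apply_moebius (hf : IsGamma0Invariant N f) {a b c d : ℤ} (hdet : a * d - b * c = 1)
    (hc : (N : ℤ) ∣ c) {τ : ℂ} (hτ : 0 < τ.im) :
    f ((a * τ + b) / (c * τ + d)) = f τ := by
  have hdet' : Matrix.det !![a, b; c, d] = 1 := by rw [Matrix.det_fin_two_of, hdet]
  let γ : Matrix.SpecialLinearGroup (Fin 2) ℤ := ⟨!![a, b; c, d], hdet'⟩
  have hmem : γ ∈ CongruenceSubgroup.Gamma0 N :=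
    CongruenceSubgroup.Gamma0_mem.mpr ((ZMod.intCast_zmod_eq_zero_iff_dvd c N).mpr hc)
  simpa [γ] using hf γ hmem τ hτ

lemma apply_neg_inv_add_div (hf : IsGamma0Invariant N f) (hN : N ≠ 0) {ℓ m k : ℤ}
    (hlmk : ℓ * m + 1 = N * k) {τ : ℂ} (hτ : 0 < τ.im) :
    f ((-1 / (N * τ) + ℓ) / N) = f ((N * τ + m) / N) := by
  have hN' : (N : ℂ) ≠ 0 := Nat.cast_ne_zero.mpr hN
  have hτ0 : τ ≠ 0 := fun h => by simp [h] at hτ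
  have hlmkC : (ℓ : ℂ) * m + 1 = N * k := by exact_mod_cast hlmk
  have hw : 0 < (τ + (m : ℂ) / N).im := by
    simpa [Complex.div_im] using hτ
  have key := hf.apply_moebius (a := ℓ) (b := -k) (c := N) (d := -m) (by linarith)
    dvd_rfl hw
  have hmoeb : ((ℓ : ℂ) * (τ + m / N) + (-k : ℤ)) / ((N : ℤ) * (τ + m / N) + (-m : ℤ))
      = (-1 / (N * τ) + ℓ) / N := by
    push_cast
    field_simp
    linear_combination τ * N * hlmkC
  rw [hmoeb] at key
  rw [key]
  congr 1
  field_simp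

end IsGamma0Invariant

def negInvMod (p ℓ : ℕ) : ℕ := (-(ℓ : ZMod p)⁻¹).val

section negInvMod

variable {p : ℕ} [Fact p.Prime] {ℓ : ℕ}

lemma natCast_ne_zero_of_mem_Ico (hℓ : ℓ ∈ Ico 1 p) : (ℓ : ZMod p) ≠ 0 := by
  obtain ⟨h1, h2⟩ := mem_Ico.mp hℓ
  rw [Ne, ZMod.natCast_eq_zero_iff]
  exact fun h => absurd (Nat.le_of_dvd h1 h) (by omega)

lemma natCast_negInvMod : (negInvMod p ℓ : ZMod p) = -(ℓ : ZMod p)⁻¹ :=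
  ZMod.natCast_zmod_val _

lemma negInvMod_mem_Ico (hℓ : ℓ ∈ Ico 1 p) : negInvMod p ℓ ∈ Ico 1 p := by
  have hval : negInvMod p ℓ ≠ 0 := by
    rw [negInvMod, Ne, ZMod.val_eq_zero, neg_eq_zero]
    exact inv_ne_zero (natCast_ne_zero_of_mem_Ico hℓ)
  exact mem_Ico.mpr ⟨Nat.one_le_iff_ne_zero.mpr hval, ZMod.val_lt _⟩

lemma negInvMod_negInvMod (hℓ : ℓ ∈ Ico 1 p) : negInvMod p (negInvMod p ℓ) = ℓ := by
  rw [negInvMod, natCast_negInvMod, inv_neg, inv_inv, neg_neg,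
    ZMod.val_cast_of_lt (mem_Ico.mp hℓ).2]

lemma dvd_mul_negInvMod_add_one (hℓ : ℓ ∈ Ico 1 p) :
    (p : ℤ) ∣ ℓ * negInvMod p ℓ + 1 := by
  rw [← ZMod.intCast_zmod_eq_zero_iff_dvd]
  push_cast
  rw [natCast_negInvMod, mul_neg, mul_inv_cancel₀ (natCast_ne_zero_of_mem_Ico hℓ), neg_add_cancel]

lemma sum_Ico_comp_negInvMod {M : Type*} [AddCommMonoid M] (g : ℕ → M) :
    ∑ ℓ ∈ Ico 1 p, g (negInvMod p ℓ) = ∑ ℓ ∈ Ico 1 p, g ℓ :=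
  sum_nbij' (negInvMod p) (negInvMod p) (fun _ => negInvMod_mem_Ico)
    (fun _ => negInvMod_mem_Ico) (fun _ => negInvMod_negInvMod) (fun _ => negInvMod_negInvMod)
    (fun _ _ => rfl)

end negInvMod

theorem up_at_zero_formula_general (p : ℕ) (hp : p.Prime) (f : ℂ → ℂ)
    (hinv : ∀ γ : Matrix.SpecialLinearGroup (Fin 2) ℤ, γ ∈ CongruenceSubgroup.Gamma0 p →
      ∀ τ : ℂ, 0 < τ.im →
        f ((((γ : Matrix (Fin 2) (Fin 2) ℤ) 0 0 : ℂ) * τ + ((γ : Matrix (Fin 2) (Fin 2) ℤ) 0 1 : ℂ)) /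
          (((γ : Matrix (Fin 2) (Fin 2) ℤ) 1 0 : ℂ) * τ + ((γ : Matrix (Fin 2) (Fin 2) ℤ) 1 1 : ℂ))) = f τ) :
    ∀ τ : ℂ, 0 < τ.im →
      (p : ℂ) * UpFn p f (-1 / (p * τ)) =
        (p : ℂ) * UpFn p f (p * τ) + f (-1 / (p ^ 2 * τ)) - f τ := by
  have : Fact p.Prime := ⟨hp⟩
  intro τ hτ
  have hterms : ∀ ℓ ∈ Ico 1 p,
      f ((-1 / (p * τ) + ℓ) / p) = f ((p * τ + (negInvMod p ℓ : ℕ)) / p) := fun ℓ hℓ => by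
    obtain ⟨k, hk⟩ := dvd_mul_negInvMod_add_one hℓ
    exact_mod_cast IsGamma0Invariant.apply_neg_inv_add_div hinv hp.ne_zero hk hτ
  rw [natCast_mul_UpFn hp.ne_zero, natCast_mul_UpFn hp.ne_zero,
    sum_range_eq_add_Ico _ hp.pos, sum_range_eq_add_Ico _ hp.pos, sum_congr rfl hterms,
    sum_Ico_comp_negInvMod (fun m => f ((p * τ + (m : ℕ)) / p))]
  have hzero_left : (-1 / ((p : ℂ) * τ) + (0 : ℕ)) / p = -1 / (p ^ 2 * τ) := by
    push_cast; ring
  have hzero_right : ((p : ℂ) * τ + (0 : ℕ)) / p = τ := by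
    rw [Nat.cast_zero, add_zero, mul_div_cancel_left₀ τ (Nat.cast_ne_zero.mpr hp.ne_zero)]
  rw [hzero_left, hzero_right]
  ring

/-- If `f` is a modular function on `Γ₀(p)` (holomorphic on the upper half-plane and
`Γ₀(p)`-invariant), then `p·(U_p f)(-1/(pτ)) = p·(U_p f)(pτ) + f(-1/(p²τ)) - f(τ)`. -/
theorem up_at_zero_formula (p : ℕ) (hp : p.Prime) (f : ℂ → ℂ)
    (hhol : ∀ τ : ℂ, 0 < τ.im → DifferentiableAt ℂ f τ)
    (hinv : ∀ γ : Matrix.SpecialLinearGroup (Fin 2) ℤ, γ ∈ CongruenceSubgroup.Gamma0 p →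
      ∀ τ : ℂ, 0 < τ.im →
        f ((((γ : Matrix (Fin 2) (Fin 2) ℤ) 0 0 : ℂ) * τ + ((γ : Matrix (Fin 2) (Fin 2) ℤ) 0 1 : ℂ)) /
          (((γ : Matrix (Fin 2) (Fin 2) ℤ) 1 0 : ℂ) * τ + ((γ : Matrix (Fin 2) (Fin 2) ℤ) 1 1 : ℂ))) = f τ) :
    ∀ τ : ℂ, 0 < τ.im →
      (p : ℂ) * UpFn p f (-1 / (p * τ)) =
        (p : ℂ) * UpFn p f (p * τ) + f (-1 / (p ^ 2 * τ)) - f τ :=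
  up_at_zero_formula_general p hp f hinv
end

section
/- Let p ∈ {2,3,5,7} and suppose b₁,…,b_p are elements of a commutative ring, and h, φ are invertible elements of a commutative algebra over that ring with h⁻¹ - φ invertible, satisfying P Σ_{j=1}^{p} b_j (h^{-j} - φ^j) + h - φ^{-1} = 0 for a scalar P. Then h^p = Σ_{j=1}^{p} (P Σ_{ℓ=j}^{p} b_ℓ φ^{ℓ-j+1}) h^{p-j}. -/
open Finset

/-- The algebraic content of the modular equation: if invertible elements `h, φ` of a
commutative algebra (with `h⁻¹ - φ` invertible) satisfy
`P Σ_{j=1}^p b_j (h^{-j} - φ^j) + h - φ^{-1} = 0`, then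
`h^p = Σ_{j=1}^p (P Σ_{ℓ=j}^p b_ℓ φ^{ℓ-j+1}) h^{p-j}`. -/
theorem modular_equation_algebraic (R A : Type*) [CommRing R] [CommRing A] [Algebra R A]
    (p : ℕ) (hp : p = 2 ∨ p = 3 ∨ p = 5 ∨ p = 7)
    (b : ℕ → R) (P : R) (h φ hi φi d : A)
    (hh : h * hi = 1) (hφ : φ * φi = 1) (hd : (hi - φ) * d = 1)
    (hrel : algebraMap R A P * ∑ j ∈ Icc 1 p, algebraMap R A (b j) * (hi ^ j - φ ^ j)
      + h - φi = 0) :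
    h ^ p = ∑ j ∈ Icc 1 p,
      (algebraMap R A P * ∑ ℓ ∈ Icc j p, algebraMap R A (b ℓ) * φ ^ (ℓ - j + 1)) * h ^ (p - j) := by
  have key : ∀ ℓ, 1 ≤ ℓ → ℓ ≤ p →
      (hi ^ ℓ - φ ^ ℓ) * (φ * hi * d * h ^ p)
        = ∑ j ∈ Icc 1 ℓ, φ ^ (ℓ - j + 1) * h ^ (p - j) := by
    intro ℓ h1 hℓ
    induction ℓ with
    | zero => omega
    | succ n ih =>
      have hpow : hi ^ (n + 1) * h ^ p = h ^ (p - (n + 1)) := by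
        have e : h ^ p = h ^ (n + 1) * h ^ (p - (n + 1)) := by
          rw [← pow_add]; congr 1; omega
        have hih : hi ^ (n + 1) * h ^ (n + 1) = 1 := by
          rw [← mul_pow, mul_comm, hh, one_pow]
        rw [e, ← mul_assoc, hih, one_mul]
      rcases Nat.eq_or_lt_of_le h1 with h1' | h1'
      · -- base case : n + 1 = 1
        have hn : n = 0 := by omega
        subst hn
        rw [Finset.Icc_self, Finset.sum_singleton]
        norm_num
        linear_combination (φ * hi * h ^ p) * hd + φ * hpow
      · -- inductive step
        have h1n : 1 ≤ n := by omega
        have hnp : n ≤ p := by omega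
        have ih' := ih h1n hnp
        rw [Finset.sum_Icc_succ_top (by omega : 1 ≤ n + 1)]
        have esum : ∑ j ∈ Icc 1 n, φ ^ (n + 1 - j + 1) * h ^ (p - j)
            = φ * ∑ j ∈ Icc 1 n, φ ^ (n - j + 1) * h ^ (p - j) := by
          rw [Finset.mul_sum]
          refine Finset.sum_congr rfl fun j hj => ?_
          simp only [Finset.mem_Icc] at hj
          have e2 : n + 1 - j + 1 = (n - j + 1) + 1 := by omega
          rw [e2, pow_succ]
          ring
        have e3 : n + 1 - (n + 1) + 1 = 1 := by omega
        rw [esum, ← ih', e3]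
        linear_combination (hi ^ n * φ * hi * h ^ p) * hd + φ * hpow
  symm
  calc ∑ j ∈ Icc 1 p,
      (algebraMap R A P * ∑ ℓ ∈ Icc j p, algebraMap R A (b ℓ) * φ ^ (ℓ - j + 1)) * h ^ (p - j)
      = algebraMap R A P * ∑ j ∈ Icc 1 p, ∑ ℓ ∈ Icc j p,
          algebraMap R A (b ℓ) * (φ ^ (ℓ - j + 1) * h ^ (p - j)) := by
        simp only [Finset.mul_sum, Finset.sum_mul]
        exact Finset.sum_congr rfl fun j _ => Finset.sum_congr rfl fun ℓ _ => by ring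
    _ = algebraMap R A P * ∑ ℓ ∈ Icc 1 p, ∑ j ∈ Icc 1 ℓ,
          algebraMap R A (b ℓ) * (φ ^ (ℓ - j + 1) * h ^ (p - j)) := by
        congr 1
        refine Finset.sum_comm' ?_
        intro x y
        simp only [Finset.mem_Icc]
        omega
    _ = algebraMap R A P * ∑ ℓ ∈ Icc 1 p,
          algebraMap R A (b ℓ) * ((hi ^ ℓ - φ ^ ℓ) * (φ * hi * d * h ^ p)) := by
        congr 1
        refine Finset.sum_congr rfl fun ℓ hℓ => ?_
        simp only [Finset.mem_Icc] at hℓ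
        rw [← Finset.mul_sum, key ℓ hℓ.1 hℓ.2]
    _ = (algebraMap R A P * ∑ ℓ ∈ Icc 1 p, algebraMap R A (b ℓ) * (hi ^ ℓ - φ ^ ℓ))
          * (φ * hi * d * h ^ p) := by
        simp only [Finset.mul_sum, Finset.sum_mul]
        exact Finset.sum_congr rfl fun ℓ _ => by ring
    _ = (φi - h) * (φ * hi * d * h ^ p) := by
        have e : algebraMap R A P * ∑ j ∈ Icc 1 p, algebraMap R A (b j) * (hi ^ j - φ ^ j)
            = φi - h := by linear_combination hrel
        rw [e]
    _ = h ^ p := by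
        linear_combination (hi * d * h ^ p) * hφ - (φ * d * h ^ p) * hh + (h ^ p) * hd
end

section
/- Let g₁ = 2^{16}(3φ + 2⁸φ²) and g₂ = -2^{24}φ in ℤ[φ], and define S₀ = 2, S₁ = g₁, and S_n = g₁ S_{n-1} - g₂ S_{n-2} for n ≥ 2. Then for every n ≥ 1, S_n ∈ 2^{4n+12} R^{(2)}, i.e., S_n = 2^{4n+12}(d₁φ + Σ_{i=2}^{N} d_i 2^{8(i-1)} φⁱ) for some integers d_i. -/
open Polynomial Finset

/-- `R^{(2)}`: polynomials of the form `d₁φ + Σ_{n=2}^{N} d_n 2^{8(n-1)} φⁿ` with `d_n ∈ ℤ`,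
where `φ` is the polynomial variable `X`. -/
def R2 : Set (Polynomial ℤ) :=
  {f | ∃ (N : ℕ) (d : ℕ → ℤ),
    f = (d 1 : Polynomial ℤ) * X + ∑ i ∈ Icc 2 N, (d i : Polynomial ℤ) * 2 ^ (8 * (i - 1)) * X ^ i}

/-- Coefficient-wise characterization: constant term zero and `2^{8(i-1)}` divides coeff `i`. -/
def Pgood (f : Polynomial ℤ) : Prop :=
  f.coeff 0 = 0 ∧ ∀ i, 2 ≤ i → (2 : ℤ) ^ (8 * (i - 1)) ∣ f.coeff i

lemma Pgood_add {f g : Polynomial ℤ} (hf : Pgood f) (hg : Pgood g) : Pgood (f + g) := by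
  refine ⟨by simp [hf.1, hg.1], fun i hi => ?_⟩
  rw [coeff_add]
  exact dvd_add (hf.2 i hi) (hg.2 i hi)

lemma Pgood_Cmul (a : ℤ) {f : Polynomial ℤ} (hf : Pgood f) : Pgood (C a * f) := by
  refine ⟨by simp [hf.1], fun i hi => ?_⟩
  rw [coeff_C_mul]
  exact (hf.2 i hi).mul_left a

lemma Pgood_CX (a : ℤ) : Pgood (C a * X) := by
  refine ⟨by simp, fun i hi => ?_⟩
  rw [coeff_C_mul, coeff_X]
  have : ¬ (1 = i) := by omega
  simp [this]

lemma Pgood_CXmul (a : ℤ) (ha : (2 : ℤ) ^ 8 ∣ a) {f : Polynomial ℤ} (hf : Pgood f) :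
    Pgood (C a * X * f) := by
  constructor
  · rw [mul_assoc, coeff_C_mul]
    have : (X * f).coeff 0 = 0 := by
      rw [mul_comm]
      simp [coeff_mul_X_zero]
    simp [this]
  · intro i hi
    obtain ⟨j, rfl⟩ : ∃ j, i = j + 1 := ⟨i - 1, by omega⟩
    rw [mul_assoc, coeff_C_mul, coeff_X_mul]
    obtain ⟨b, rfl⟩ := ha
    rcases Nat.lt_or_ge j 2 with hj | hj
    · interval_cases j
      · simp [hf.1]
      · have : 8 * (1 + 1 - 1) = 8 := by norm_num
        rw [this]
        exact dvd_mul_of_dvd_left (dvd_mul_right _ b) _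
    · obtain ⟨c, hc⟩ := hf.2 j hj
      refine ⟨b * c, ?_⟩
      rw [hc]
      have h8 : 8 * (j + 1 - 1) = 8 + 8 * (j - 1) := by omega
      rw [h8, pow_add]
      ring

lemma Pgood_mem {f : Polynomial ℤ} (hf : Pgood f) : f ∈ R2 := by
  refine ⟨f.natDegree,
    fun i => if i = 1 then f.coeff 1 else f.coeff i / 2 ^ (8 * (i - 1)), ?_⟩
  have hC : ∀ (i : ℕ) (a : ℤ),
      (a : Polynomial ℤ) * 2 ^ (8 * (i - 1)) * X ^ i = C (a * 2 ^ (8 * (i - 1))) * X ^ i := by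
    intro i a
    simp [map_mul, map_pow]
  ext k
  rw [coeff_add]
  have h1 : ((if (1:ℕ) = 1 then f.coeff 1 else f.coeff 1 / 2 ^ (8 * (1 - 1)) : ℤ) :
      Polynomial ℤ) * X = C (f.coeff 1) * X := by simp
  rw [h1]
  have hsum : (∑ i ∈ Icc 2 f.natDegree,
      ((if i = 1 then f.coeff 1 else f.coeff i / 2 ^ (8 * (i - 1)) : ℤ) : Polynomial ℤ) *
        2 ^ (8 * (i - 1)) * X ^ i).coeff k =
      if k ∈ Icc 2 f.natDegree then f.coeff k else 0 := by
    rw [finset_sum_coeff]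
    rw [Finset.sum_congr rfl (fun i hi => ?_)]
    · exact Finset.sum_ite_eq' _ _ _
    · have hi2 : i ≠ 1 := by
        have := (Finset.mem_Icc.mp hi).1; omega
      rw [hC, if_neg hi2, C_mul_X_pow_eq_monomial, coeff_monomial]
      have : f.coeff i / 2 ^ (8 * (i - 1)) * 2 ^ (8 * (i - 1)) = f.coeff i :=
        Int.ediv_mul_cancel (hf.2 i (Finset.mem_Icc.mp hi).1)
      rw [this]
  rw [hsum, coeff_C_mul, coeff_X]
  by_cases hk0 : k = 0
  · subst hk0; simp [hf.1]
  by_cases hk1 : k = 1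
  · subst hk1; simp
  have hne : ¬ (1 = k) := fun h => hk1 h.symm
  rw [if_neg hne, mul_zero, zero_add]
  by_cases hk : k ∈ Icc 2 f.natDegree
  · rw [if_pos hk]
  · rw [if_neg hk]
    have hk2 : 2 ≤ k := by omega
    have : f.natDegree < k := by
      by_contra h
      exact hk (Finset.mem_Icc.mpr ⟨hk2, by omega⟩)
    exact coeff_eq_zero_of_natDegree_lt this

/-- Newton power sums for `g₁ = 2^{16}(3φ + 2⁸φ²)`, `g₂ = -2^{24}φ`:
for every `n ≥ 1`, `S_n ∈ 2^{4n+12} R^{(2)}`. -/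
theorem newton_sums_p2 (S : ℕ → Polynomial ℤ)
    (hS0 : S 0 = 2)
    (hS1 : S 1 = 2 ^ 16 * (3 * X + 2 ^ 8 * X ^ 2))
    (hrec : ∀ n, 2 ≤ n →
      S n = 2 ^ 16 * (3 * X + 2 ^ 8 * X ^ 2) * S (n - 1) - (-(2 ^ 24) * X) * S (n - 2)) :
    ∀ n, 1 ≤ n → ∃ r ∈ R2, S n = 2 ^ (4 * n + 12) * r := by
  have h256 : (2 : ℤ) ^ 8 ∣ 256 := by norm_num
  have key : ∀ n, 1 ≤ n → ∃ t, Pgood t ∧ S n = 2 ^ (4 * n + 12) * t := by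
    intro n
    induction n using Nat.strong_induction_on with
    | _ n ih =>
      intro hn
      match n, hn with
      | 1, _ =>
        refine ⟨C 3 * X + C 256 * X ^ 2, ?_, ?_⟩
        · constructor
          · simp
          · intro i hi
            rcases Nat.lt_or_ge i 3 with h | h
            · interval_cases i
              norm_num [coeff_X]
            · have h1 : ¬ (1 = i) := by omega
              have h2 : ¬ (2 = i) := by omega
              have h3 : i ≠ 2 := by omega
              simp [coeff_X, coeff_X_pow, h1, h2, h3]
        · rw [hS1]
          have a3 : (C 3 : Polynomial ℤ) = 3 := by norm_num
          have a256 : (C 256 : Polynomial ℤ) = 256 := by norm_num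
          have a48 : (C 48 : Polynomial ℤ) = 48 := by norm_num
          have a16 : (C 16 : Polynomial ℤ) = 16 := by norm_num
          have a32 : (C 32 : Polynomial ℤ) = 32 := by norm_num
          simp only [a3, a256, a48, a16, a32]
          ring
      | 2, _ =>
        obtain ⟨t1, ht1, h1⟩ := ih 1 (by norm_num) (by norm_num)
        refine ⟨C 48 * (C 256 * X * t1) + C 16 * (C 256 * X * (C 256 * X * t1)) + C 32 * X,
          ?_, ?_⟩
        · exact Pgood_add (Pgood_add (Pgood_Cmul 48 (Pgood_CXmul 256 h256 ht1))
            (Pgood_Cmul 16 (Pgood_CXmul 256 h256 (Pgood_CXmul 256 h256 ht1)))) (Pgood_CX 32)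
        · have hr := hrec 2 (by norm_num)
          norm_num at hr
          rw [hr, hS0, h1]
          have a3 : (C 3 : Polynomial ℤ) = 3 := by norm_num
          have a256 : (C 256 : Polynomial ℤ) = 256 := by norm_num
          have a48 : (C 48 : Polynomial ℤ) = 48 := by norm_num
          have a16 : (C 16 : Polynomial ℤ) = 16 := by norm_num
          have a32 : (C 32 : Polynomial ℤ) = 32 := by norm_num
          simp only [a3, a256, a48, a16, a32]
          ring
      | (m + 3), _ =>
        obtain ⟨t2, ht2, h2⟩ := ih (m + 2) (by omega) (by omega)
        obtain ⟨t1, ht1, h1⟩ := ih (m + 1) (by omega) (by omega)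
        refine ⟨C 48 * (C 256 * X * t2) + C 16 * (C 256 * X * (C 256 * X * t2)) +
          C 256 * (C 256 * X * t1), ?_, ?_⟩
        · exact Pgood_add (Pgood_add (Pgood_Cmul 48 (Pgood_CXmul 256 h256 ht2))
            (Pgood_Cmul 16 (Pgood_CXmul 256 h256 (Pgood_CXmul 256 h256 ht2))))
            (Pgood_Cmul 256 (Pgood_CXmul 256 h256 ht1))
        · have hr := hrec (m + 3) (by omega)
          have e1 : m + 3 - 1 = m + 2 := by omega
          have e2 : m + 3 - 2 = m + 1 := by omega
          rw [e1, e2] at hr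
          rw [hr, h2, h1]
          have p1 : 4 * (m + 2) + 12 = (4 * m + 12) + 8 := by omega
          have p2 : 4 * (m + 1) + 12 = (4 * m + 12) + 4 := by omega
          have p3 : 4 * (m + 3) + 12 = (4 * m + 12) + 12 := by omega
          rw [p1, p2, p3, pow_add, pow_add, pow_add]
          have a3 : (C 3 : Polynomial ℤ) = 3 := by norm_num
          have a256 : (C 256 : Polynomial ℤ) = 256 := by norm_num
          have a48 : (C 48 : Polynomial ℤ) = 48 := by norm_num
          have a16 : (C 16 : Polynomial ℤ) = 16 := by norm_num
          have a32 : (C 32 : Polynomial ℤ) = 32 := by norm_num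
          simp only [a3, a256, a48, a16, a32]
          ring
  intro n hn
  obtain ⟨t, ht, hst⟩ := key n hn
  exact ⟨t, Pgood_mem ht, hst⟩
end

section
/- Let g₁ = 3⁹(3⁹φ³ + 4·3⁵φ² + 10φ), g₂ = 3^{14}(-3⁴φ² - 4φ), g₃ = 3^{18}φ in ℤ[φ], and define S₀ = 3, S₁ = g₁, S₂ = g₁S₁ - 2g₂, and S_n = g₁S_{n-1} - g₂S_{n-2} + g₃S_{n-3} for n ≥ 3. Then for every n ≥ 1, S_n = 3^{2n+7} r for some r ∈ R^{(3)}, where R^{(3)} is the set of polynomials d₁φ + Σ_{n=2}^{N} d_n 3^{4(n-1)} φⁿ with integer coefficients d_n. -/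
open Polynomial Finset

def R3 : Set (Polynomial ℤ) :=
  {f | ∃ (N : ℕ) (d : ℕ → ℤ),
    f = (d 1 : Polynomial ℤ) * X + ∑ i ∈ Icc 2 N, (d i : Polynomial ℤ) * 3 ^ (4 * (i - 1)) * X ^ i}

/-!
`R^{(3)}` consists of the polynomials `f` with `f(0) = 0` whose `φⁱ`-coefficient is divisible
by `3^{4(i-1)}`, and for `f, g` of this kind `3⁴ f g` is again of this kind. Write
`S_n = 3^{2n+7} r_n`. Since `g₁ = 3⁶ c₁`, `-g₂ = 3⁸ c₂`, `g₃ = 3¹⁰ c₃` with `c₁, c₂, c₃ ∈ R^{(3)}`,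
dividing the recurrence by `3^{2n+7}` gives `r_n = 3⁴ (c₁ r_{n-1} + c₂ r_{n-2} + c₃ r_{n-3})`, so
`r_n ∈ R^{(3)}` by induction once the cases `n = 1, 2, 3` are computed directly.
-/

namespace Polynomial

variable {R : Type*} [CommRing R]

def coeffDvdPowSubmodule (q : R) : Submodule R R[X] where
  carrier := {f | f.coeff 0 = 0 ∧ ∀ i, q ^ (i - 1) ∣ f.coeff i}
  add_mem' hf hg := ⟨by simp [hf.1, hg.1], fun i => by simpa using dvd_add (hf.2 i) (hg.2 i)⟩
  zero_mem' := ⟨coeff_zero 0, fun _ => by simp⟩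
  smul_mem' c _ hf := ⟨by simp [hf.1], fun i => by simpa using (hf.2 i).mul_left c⟩

variable {q : R}

theorem C_mul_X_pow_mem_coeffDvdPowSubmodule {c : R} {n : ℕ} (hn : n ≠ 0) (hc : q ^ (n - 1) ∣ c) :
    C c * X ^ n ∈ coeffDvdPowSubmodule q := by
  refine ⟨by simp [hn.symm], fun i => ?_⟩
  rw [coeff_C_mul_X_pow]
  split_ifs with h
  · exact h ▸ hc
  · exact dvd_zero _

theorem C_mul_X_mem_coeffDvdPowSubmodule (c : R) : C c * X ∈ coeffDvdPowSubmodule q := by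
  simpa using C_mul_X_pow_mem_coeffDvdPowSubmodule (q := q) (c := c) one_ne_zero (by simp)

theorem C_mul_mul_mem_coeffDvdPowSubmodule {f g : R[X]} (hf : f ∈ coeffDvdPowSubmodule q)
    (hg : g ∈ coeffDvdPowSubmodule q) : C q * (f * g) ∈ coeffDvdPowSubmodule q := by
  refine ⟨by simp [mul_coeff_zero, hf.1], fun k => ?_⟩
  rw [coeff_C_mul, coeff_mul, Finset.mul_sum]
  refine Finset.dvd_sum fun ⟨i, j⟩ hij => ?_
  rw [HasAntidiagonal.mem_antidiagonal] at hij
  rcases i with _ | i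
  · simp [hf.1]
  rcases j with _ | j
  · simp [hg.1]
  rw [show k - 1 = 1 + (i + 1 - 1) + (j + 1 - 1) by omega, pow_add, pow_add, pow_one, mul_assoc]
  exact mul_dvd_mul_left q (mul_dvd_mul (hf.2 _) (hg.2 _))

end Polynomial

theorem mem_R3_of_mem_coeffDvdPowSubmodule {f : ℤ[X]} (hf : f ∈ coeffDvdPowSubmodule (3 ^ 4 : ℤ)) :
    f ∈ R3 := by
  obtain ⟨hf0, hdvd⟩ := hf
  choose d hd using hdvd
  refine ⟨f.natDegree + 1, d, ?_⟩
  have hterm : ∀ i, (d i : ℤ[X]) * 3 ^ (4 * (i - 1)) * X ^ i = C (f.coeff i) * X ^ i := by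
    intro i
    rw [hd i, ← pow_mul, C_mul, ← C_eq_intCast, Int.cast_id, C_pow, C_ofNat, mul_comm (3 ^ _)]
  conv_lhs => rw [as_sum_range_C_mul_X_pow' f (n := f.natDegree + 1 + 1) (by omega),
    ← Nat.Ico_zero_eq_range, sum_eq_sum_Ico_succ_bot (by omega), sum_eq_sum_Ico_succ_bot (by omega),
    Ico_add_one_right_eq_Icc]
  simpa [hterm, hf0] using hd 1

theorem Nat.induction_three_from_one {P : ℕ → Prop} (h₁ : P 1) (h₂ : P 2) (h₃ : P 3)
    (step : ∀ k, P (k + 1) → P (k + 2) → P (k + 3) → P (k + 4)) : ∀ n, 1 ≤ n → P n := by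
  have h : ∀ k, P (k + 1) ∧ P (k + 2) ∧ P (k + 3) := by
    intro k
    induction k with
    | zero => exact ⟨h₁, h₂, h₃⟩
    | succ k ih => exact ⟨ih.2.1, ih.2.2, step k ih.1 ih.2.1 ih.2.2⟩
  intro n hn
  obtain ⟨k, rfl⟩ := Nat.exists_eq_add_of_le' hn
  exact (h k).1

local notation "𝓡₃" => coeffDvdPowSubmodule (3 ^ 4 : ℤ)

namespace NewtonSumsP3

noncomputable def c₁ : ℤ[X] := C (3 ^ 12) * X ^ 3 + C (4 * 3 ^ 8) * X ^ 2 + C (10 * 3 ^ 3) * X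

noncomputable def c₂ : ℤ[X] := C (3 ^ 10) * X ^ 2 + C (4 * 3 ^ 6) * X

noncomputable def c₃ : ℤ[X] := C (3 ^ 8) * X

theorem c₁_mem : c₁ ∈ 𝓡₃ :=
  add_mem (add_mem (C_mul_X_pow_mem_coeffDvdPowSubmodule (by norm_num) (by norm_num))
    (C_mul_X_pow_mem_coeffDvdPowSubmodule (by norm_num) (by norm_num)))
    (C_mul_X_mem_coeffDvdPowSubmodule _)

theorem c₂_mem : c₂ ∈ 𝓡₃ :=
  add_mem (C_mul_X_pow_mem_coeffDvdPowSubmodule (by norm_num) (by norm_num))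
    (C_mul_X_mem_coeffDvdPowSubmodule _)

theorem c₃_mem : c₃ ∈ 𝓡₃ := C_mul_X_mem_coeffDvdPowSubmodule _

theorem exists_mem_of_recurrence {s a b c : ℤ[X]} (e : ℕ) (ha : a ∈ 𝓡₃) (hb : b ∈ 𝓡₃) (hc : c ∈ 𝓡₃)
    (hs : s = 3 ^ 9 * (3 ^ 9 * X ^ 3 + 4 * 3 ^ 5 * X ^ 2 + 10 * X) * (3 ^ (e + 4) * a)
        - (3 ^ 14 * (-(3 ^ 4) * X ^ 2 - 4 * X)) * (3 ^ (e + 2) * b) + (3 ^ 18 * X) * (3 ^ e * c)) :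
    ∃ r ∈ 𝓡₃, s = 3 ^ (e + 6) * r :=
  ⟨C (3 ^ 4) * (c₁ * a) + C (3 ^ 4) * (c₂ * b) + C (3 ^ 4) * (c₃ * c),
    add_mem (add_mem (C_mul_mul_mem_coeffDvdPowSubmodule c₁_mem ha)
      (C_mul_mul_mem_coeffDvdPowSubmodule c₂_mem hb))
      (C_mul_mul_mem_coeffDvdPowSubmodule c₃_mem hc),
    by rw [hs, c₁, c₂, c₃]; simp only [map_mul, map_pow, C_ofNat]; ring⟩

end NewtonSumsP3

open NewtonSumsP3

/-- Newton power sums for `g₁ = 3⁹(3⁹φ³ + 4·3⁵φ² + 10φ)`, `g₂ = 3^{14}(-3⁴φ² - 4φ)`,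
`g₃ = 3^{18}φ`: for every `n ≥ 1`, `S_n = 3^{2n+7} r` for some `r ∈ R^{(3)}`. -/
theorem newton_sums_p3 (S : ℕ → Polynomial ℤ)
    (hS0 : S 0 = 3)
    (hS1 : S 1 = 3 ^ 9 * (3 ^ 9 * X ^ 3 + 4 * 3 ^ 5 * X ^ 2 + 10 * X))
    (hS2 : S 2 = 3 ^ 9 * (3 ^ 9 * X ^ 3 + 4 * 3 ^ 5 * X ^ 2 + 10 * X) * S 1
      - 2 * (3 ^ 14 * (-(3 ^ 4) * X ^ 2 - 4 * X)))
    (hrec : ∀ n, 3 ≤ n →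
      S n = 3 ^ 9 * (3 ^ 9 * X ^ 3 + 4 * 3 ^ 5 * X ^ 2 + 10 * X) * S (n - 1)
        - (3 ^ 14 * (-(3 ^ 4) * X ^ 2 - 4 * X)) * S (n - 2)
        + (3 ^ 18 * X) * S (n - 3)) :
    ∀ n, 1 ≤ n → ∃ r ∈ R3, S n = 3 ^ (2 * n + 7) * r := by
  let P n := ∃ r ∈ 𝓡₃, S n = 3 ^ (2 * n + 7) * r
  obtain ⟨r₁, hr₁, hS₁⟩ : P 1 :=
    ⟨C (3 ^ 9) * X ^ 3 + C (4 * 3 ^ 5) * X ^ 2 + C 10 * X,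
      add_mem (add_mem (C_mul_X_pow_mem_coeffDvdPowSubmodule (by norm_num) (by norm_num))
        (C_mul_X_pow_mem_coeffDvdPowSubmodule (by norm_num) (by norm_num)))
        (C_mul_X_mem_coeffDvdPowSubmodule _),
      by rw [hS1]; simp only [map_mul, map_pow, C_ofNat]⟩
  obtain ⟨r₂, hr₂, hS₂⟩ : P 2 :=
    ⟨C (3 ^ 4) * (c₁ * r₁) + (C (2 * 3 ^ 7) * X ^ 2 + C (8 * 3 ^ 3) * X),
      add_mem (C_mul_mul_mem_coeffDvdPowSubmodule c₁_mem hr₁)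
        (add_mem (C_mul_X_pow_mem_coeffDvdPowSubmodule (by norm_num) (by norm_num))
          (C_mul_X_mem_coeffDvdPowSubmodule _)),
      by rw [hS2, hS₁, c₁]; simp only [map_mul, map_pow, C_ofNat]; ring⟩
  have hP₃ : P 3 :=
    ⟨C (3 ^ 4) * (c₁ * r₂) + C (3 ^ 4) * (c₂ * r₁) + C (3 ^ 6) * X,
      add_mem (add_mem (C_mul_mul_mem_coeffDvdPowSubmodule c₁_mem hr₂)
        (C_mul_mul_mem_coeffDvdPowSubmodule c₂_mem hr₁)) (C_mul_X_mem_coeffDvdPowSubmodule _),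
      by rw [hrec 3 le_rfl, hS₂, hS₁, hS0, c₁, c₂]; simp only [map_mul, map_pow, C_ofNat]; ring⟩
  have hP : ∀ n, 1 ≤ n → P n := by
    refine Nat.induction_three_from_one ⟨r₁, hr₁, hS₁⟩ ⟨r₂, hr₂, hS₂⟩ hP₃ ?_
    rintro k ⟨c, hc, hSc⟩ ⟨b, hb, hSb⟩ ⟨a, ha, hSa⟩
    refine exists_mem_of_recurrence (2 * k + 9) ha hb hc ?_
    simp only [hrec (k + 4) (by omega), Nat.reduceSubDiff, hSa, hSb, hSc]
    ring
  intro n hn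
  obtain ⟨r, hr, hSr⟩ := hP n hn
  exact ⟨r, mem_R3_of_mem_coeffDvdPowSubmodule hr, hSr⟩
end
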